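/- arXiv:1902.10633 — 2 statements merged into one kernel-verified Lean document; each statement's English description precedes it below -/
import Mathlib

section
/- Let n and d be positive integers, let B = (B_1,…,B_d) be a vector of positive integers with B_q dividing n for each q, let a ∈ (ZMod n)^d, and let x : (ZMod n)^d → ℂ with N = n^d and |B| = ∏_q B_q. Define Z : ∏_q ZMod B_q → ℂ by Z(t) = (N/|B|)·x(ℓ(t) + a), where ℓ(t) ∈ (ZMod n)^d has q-th coordinate rep(t_q)·(n/B_q) with rep(t_q) ∈ {0,…,B_q−1} the standard representative. Then for every b ∈ ∏_q ZMod B_q, the discrete Fourier transform of Z on ∏_q ZMod B_q satisfies Ẑ(b) = ∑_{f ∈ (ZMod n)^d, f mod B = b} x̂(f)·e^{2πi·(f·a)/n}, i.e., Ẑ(b) = U_x^a(B,b). -/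
open scoped BigOperators

/-- The `d`-dimensional discrete Fourier transform on `(ZMod n)^d`. -/
noncomputable def dft (n d : ℕ) [NeZero n] (x : (Fin d → ZMod n) → ℂ) :
    (Fin d → ZMod n) → ℂ :=
  fun f => ∑ t : Fin d → ZMod n, x t *
    Complex.exp (-(2 * (Real.pi : ℂ) * Complex.I) *
      (((∑ q, f q * t q : ZMod n)).val : ℂ) / (n : ℂ))

/-- The discrete Fourier transform on `∏_q ZMod (B q)`:
`Ẑ(b) = ∑_t Z(t) · e^{-2πi·∑_q rep(b_q)·rep(t_q)/B_q}`. -/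
noncomputable def dftB (d : ℕ) (B : Fin d → ℕ) [∀ q, NeZero (B q)]
    (Z : (∀ q, ZMod (B q)) → ℂ) : (∀ q, ZMod (B q)) → ℂ :=
  fun b => ∑ t : ∀ q, ZMod (B q), Z t *
    Complex.exp (-(2 * (Real.pi : ℂ) * Complex.I) *
      (∑ q, ((b q).val : ℂ) * ((t q).val : ℂ) / ((B q : ℕ) : ℂ)))

/-- The bucketing of `x` with shift `a`:
`U_x^a(B, b) = ∑_{f mod B = b} x̂(f) · e^{2πi·(f·a)/n}`. -/
noncomputable def bucket (n d : ℕ) [NeZero n] (B : Fin d → ℕ) (hB : ∀ q, B q ∣ n)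
    (x : (Fin d → ZMod n) → ℂ) (a : Fin d → ZMod n) (b : ∀ q, ZMod (B q)) : ℂ :=
  ∑ f ∈ Finset.univ.filter (fun f : Fin d → ZMod n =>
      ∀ q, ZMod.castHom (hB q) (ZMod (B q)) (f q) = b q),
    dft n d x f *
      Complex.exp ((2 * (Real.pi : ℂ) * Complex.I) *
        (((∑ q, f q * a q : ZMod n)).val : ℂ) / (n : ℂ))

/-!
Expand `x` by Fourier inversion on `(ZMod n)^d`. Since `ℓ(t)_q` is a multiple of `n / B_q`,
`e^{2πi f·ℓ(t)/n} = e^{2πi ∑_q rep(f_q mod B_q) rep(t_q) / B_q}` depends on `f` only through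
`f mod B`: it is a character of `∏_q ZMod B_q` evaluated at `t`.
Summing over `t`, orthogonality of characters of `∏_q ZMod B_q` keeps exactly the frequencies
with `f mod B = b`, and the normalisation `N / |B|` cancels the factors `1 / N` and `|B|`.
-/

open Finset
open ZMod (stdAddChar)

lemma AddChar.map_sum_eq_prod {ι A M : Type*} [AddCommMonoid A] [CommMonoid M] (ψ : AddChar A M)
    (s : Finset ι) (f : ι → A) : ψ (∑ i ∈ s, f i) = ∏ i ∈ s, ψ (f i) := by
  induction s using Finset.cons_induction <;> simp [*, AddChar.map_add_eq_mul]

section Orthogonality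

variable {ι : Type*} [Fintype ι] [DecidableEq ι]

lemma sum_prod_stdAddChar_mul {m : ι → ℕ} [∀ i, NeZero (m i)] (c : ∀ i, ZMod (m i)) :
    ∑ t : ∀ i, ZMod (m i), ∏ i, stdAddChar (t i * c i) =
      if c = 0 then ∏ i, (m i : ℂ) else 0 := by
  rw [← Fintype.prod_sum (fun i (s : ZMod (m i)) => stdAddChar (s * c i))]
  simp only [fun i => AddChar.sum_mulShift (c i) (ZMod.isPrimitive_stdAddChar (m i)), ZMod.card,
    Nat.cast_ite, Nat.cast_zero, Fintype.prod_ite_zero, funext_iff, Pi.zero_apply]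

lemma sum_stdAddChar_dotProduct {n : ℕ} [NeZero n] (u : ι → ZMod n) :
    ∑ f : ι → ZMod n, stdAddChar (∑ q, f q * u q) =
      if u = 0 then (n : ℂ) ^ Fintype.card ι else 0 := by
  simp_rw [AddChar.map_sum_eq_prod]
  rw [sum_prod_stdAddChar_mul (m := fun _ => n) u, prod_const, card_univ]

end Orthogonality

lemma stdAddChar_eq_exp {N : ℕ} [NeZero N] (z : ZMod N) :
    stdAddChar z = Complex.exp (2 * Real.pi * Complex.I * z.val / N) := by
  rw [ZMod.stdAddChar_apply, ZMod.toCircle_apply]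

lemma stdAddChar_neg_eq_exp {N : ℕ} [NeZero N] (z : ZMod N) :
    stdAddChar (-z) = Complex.exp (-(2 * Real.pi * Complex.I) * z.val / N) := by
  rw [AddChar.map_neg_eq_inv, stdAddChar_eq_exp, ← Complex.exp_neg]
  ring_nf

lemma stdAddChar_intCast_mul_div {B n : ℕ} [NeZero B] [NeZero n] (hB : B ∣ n) (k : ℤ) :
    stdAddChar ((k * (n / B : ℕ) : ℤ) : ZMod n) = stdAddChar (k : ZMod B) := by
  obtain ⟨M, rfl⟩ := hB
  have hM0 : (M : ℂ) ≠ 0 := Nat.cast_ne_zero.mpr (right_ne_zero_of_mul (NeZero.ne (B * M)))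
  rw [ZMod.stdAddChar_coe, ZMod.stdAddChar_coe, Nat.mul_div_cancel_left _ (NeZero.pos B)]
  congr 1
  push_cast
  field_simp

lemma dft_eq_sum_stdAddChar (n d : ℕ) [NeZero n] (x : (Fin d → ZMod n) → ℂ) (f : Fin d → ZMod n) :
    dft n d x f = ∑ t, x t * stdAddChar (-∑ q, f q * t q) := by
  simp_rw [stdAddChar_neg_eq_exp]
  rfl

lemma dft_inversion (n d : ℕ) [NeZero n] (x : (Fin d → ZMod n) → ℂ) (s : Fin d → ZMod n) :
    x s = ((n : ℂ) ^ d)⁻¹ * ∑ f, dft n d x f * stdAddChar (∑ q, f q * s q) := by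
  have hkernel : ∀ f t : Fin d → ZMod n,
      stdAddChar (-∑ q, f q * t q) * stdAddChar (∑ q, f q * s q) =
        stdAddChar (∑ q, f q * (s - t) q) := by
    intro f t
    rw [← AddChar.map_add_eq_mul]
    simp only [Pi.sub_apply, mul_sub, sum_sub_distrib]
    ring_nf
  simp_rw [dft_eq_sum_stdAddChar, sum_mul, mul_assoc, hkernel]
  rw [sum_comm]
  simp_rw [← mul_sum, sum_stdAddChar_dotProduct, sub_eq_zero, Fintype.card_fin]
  simp only [mul_ite, mul_zero, sum_ite_eq, mem_univ, if_true]
  rw [mul_comm, mul_inv_cancel_right₀ (pow_ne_zero _ (Nat.cast_ne_zero.mpr (NeZero.ne n)))]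

lemma stdAddChar_neg_mul_eq_exp {N : ℕ} [NeZero N] (b t : ZMod N) :
    stdAddChar (-(b * t)) = Complex.exp (-(2 * Real.pi * Complex.I) * (b.val * t.val / N)) := by
  have hbt : -(b * t) = ((-(b.val * t.val : ℤ) : ℤ) : ZMod N) := by
    push_cast [ZMod.natCast_val, ZMod.cast_id]
    rfl
  rw [hbt, ZMod.stdAddChar_coe]
  push_cast
  ring_nf

lemma dftB_eq_sum_stdAddChar (d : ℕ) (B : Fin d → ℕ) [∀ q, NeZero (B q)]
    (Z : (∀ q, ZMod (B q)) → ℂ) (b : ∀ q, ZMod (B q)) :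
    dftB d B Z b = ∑ t, Z t * ∏ q, stdAddChar (-(b q * t q)) := by
  simp_rw [stdAddChar_neg_mul_eq_exp, ← Complex.exp_sum, ← mul_sum]
  rfl

lemma stdAddChar_mul_natCast_val_mul_div {B n : ℕ} [NeZero B] [NeZero n] (hB : B ∣ n)
    (z : ZMod n) (s : ZMod B) :
    stdAddChar (z * ((s.val * (n / B) : ℕ) : ZMod n)) =
      stdAddChar (s * ZMod.castHom hB (ZMod B) z) := by
  have hz : z * ((s.val * (n / B) : ℕ) : ZMod n) =
      (((z.val * s.val : ℤ) * (n / B : ℕ) : ℤ) : ZMod n) := by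
    simp only [Int.cast_mul, Int.cast_natCast, Nat.cast_mul, ZMod.natCast_zmod_val]
    ring
  rw [hz, stdAddChar_intCast_mul_div hB, ZMod.castHom_apply, ZMod.cast_eq_val]
  simp only [Int.cast_mul, Int.cast_natCast, ZMod.natCast_zmod_val, mul_comm]

lemma stdAddChar_dotProduct_embed_add {n d : ℕ} [NeZero n] {B : Fin d → ℕ} [∀ q, NeZero (B q)]
    (hB : ∀ q, B q ∣ n) (f a : Fin d → ZMod n) (t b : ∀ q, ZMod (B q)) :
    stdAddChar (∑ q, f q * ((fun q => (((t q).val * (n / B q) : ℕ) : ZMod n)) + a) q) *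
        ∏ q, stdAddChar (-(b q * t q)) =
      stdAddChar (∑ q, f q * a q) *
        ∏ q, stdAddChar (t q * (ZMod.castHom (hB q) (ZMod (B q)) (f q) - b q)) := by
  have hsplit : ∀ q, stdAddChar (t q * (ZMod.castHom (hB q) (ZMod (B q)) (f q) - b q)) =
      stdAddChar (f q * (((t q).val * (n / B q) : ℕ) : ZMod n)) * stdAddChar (-(b q * t q)) := by
    intro q
    rw [stdAddChar_mul_natCast_val_mul_div (hB q), ← AddChar.map_add_eq_mul]
    ring_nf
  simp only [hsplit, prod_mul_distrib, Pi.add_apply, mul_add, sum_add_distrib,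
    AddChar.map_add_eq_mul, AddChar.map_sum_eq_prod]
  ring

theorem stmt9_general (n d : ℕ) [NeZero n]
    (B : Fin d → ℕ) [∀ q, NeZero (B q)] (hB : ∀ q, B q ∣ n)
    (a : Fin d → ZMod n) (x : (Fin d → ZMod n) → ℂ)
    (Z : (∀ q, ZMod (B q)) → ℂ)
    (hZ : ∀ t : ∀ q, ZMod (B q),
      Z t = ((n : ℂ) ^ d / ∏ q, ((B q : ℕ) : ℂ)) *
        x ((fun q => (((t q).val * (n / B q) : ℕ) : ZMod n)) + a)) :
    ∀ b : ∀ q, ZMod (B q), dftB d B Z b = bucket n d B hB x a b := by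
  intro b
  set P : ℂ := ∏ q, ((B q : ℕ) : ℂ)
  set reduce : (Fin d → ZMod n) → ∀ q, ZMod (B q) := fun f q => ZMod.castHom (hB q) _ (f q)
  have hP : P ≠ 0 := prod_ne_zero_iff.mpr fun q _ => Nat.cast_ne_zero.mpr (NeZero.ne _)
  have hc : (n : ℂ) ^ d / P * ((n : ℂ) ^ d)⁻¹ = P⁻¹ := by
    have hn : (n : ℂ) ≠ 0 := Nat.cast_ne_zero.mpr (NeZero.ne n)
    field_simp
  calc dftB d B Z b = ∑ t, Z t * ∏ q, stdAddChar (-(b q * t q)) := dftB_eq_sum_stdAddChar d B Z b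
    _ = ∑ t : ∀ q, ZMod (B q), P⁻¹ * ∑ f, dft n d x f * stdAddChar (∑ q, f q * a q) *
          ∏ q, stdAddChar (t q * (reduce f - b) q) := by
      refine sum_congr rfl fun t _ => ?_
      rw [hZ, dft_inversion n d x, ← mul_assoc, hc, mul_assoc, sum_mul]
      simp_rw [mul_assoc, stdAddChar_dotProduct_embed_add hB]
      rfl
    _ = P⁻¹ * ∑ f, dft n d x f * stdAddChar (∑ q, f q * a q) *
          ∑ t : ∀ q, ZMod (B q), ∏ q, stdAddChar (t q * (reduce f - b) q) := by
      rw [← mul_sum, sum_comm]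
      simp_rw [mul_sum]
    _ = ∑ f, if reduce f = b then dft n d x f * stdAddChar (∑ q, f q * a q) else 0 := by
      simp_rw [sum_prod_stdAddChar_mul, sub_eq_zero, mul_ite, mul_zero, mul_sum]
      refine sum_congr rfl fun f _ => ?_
      split_ifs
      · rw [mul_comm, mul_assoc, mul_inv_cancel₀ hP, mul_one]
      · exact mul_zero _
    _ = bucket n d B hB x a b := by
      simp_rw [bucket, sum_filter, funext_iff, stdAddChar_eq_exp]
      rfl

theorem stmt9 (n d : ℕ) [NeZero n] (hn : 0 < n) (hd : 1 ≤ d)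
    (B : Fin d → ℕ) [∀ q, NeZero (B q)] (hB : ∀ q, B q ∣ n)
    (a : Fin d → ZMod n) (x : (Fin d → ZMod n) → ℂ)
    (Z : (∀ q, ZMod (B q)) → ℂ)
    (hZ : ∀ t : ∀ q, ZMod (B q),
      Z t = ((n : ℂ) ^ d / ∏ q, ((B q : ℕ) : ℂ)) *
        x ((fun q => (((t q).val * (n / B q) : ℕ) : ZMod n)) + a)) :
    ∀ b : ∀ q, ZMod (B q), dftB d B Z b = bucket n d B hB x a b :=
  stmt9_general n d B hB a x Z hZ
end

section
/- There is an absolute constant C > 0 such that the following holds. Fix a power of two n ≥ 2, a positive integer d, N = n^d, and an integer k with 1 ≤ k ≤ N. Let S be a Bernoulli set with rate k/N in (ZMod n)^d, and let B = (B_1,…,B_d) be a vector of powers of two with B_q dividing n for each q and with |B| ≥ 4k. Then with probability at least 1 − 1/N³ the following event occurs: for every b ∈ [B], the number of g ∈ S with g mod B = b is at most C·log₂ N. -/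
/-!
Take `C = 2` and `t = 2 log₂ N`. Reduction mod `B` is a surjective group homomorphism, so each of
its `|B| ≤ N` fibres has `N / |B| ≤ N / (4k)` points, and the expected number of points of `S`
in a fibre is at most `1/4`. A fibre meets `S` in more than `t` points only if one of its
`(t+1)`-subsets lies in `S`; a union bound over these subsets bounds the probability by
`(1/4)^(t+1)`, and a union bound over the fibres gives `N · 4^-(2 log₂ N + 1) ≤ N⁻³`.
-/

open scoped BigOperators ENNReal
open MeasureTheory Finset

theorem AddMonoidHom.card_fiber_mul_card_eq {G H F : Type*} [AddGroup G] [Fintype G] [AddGroup H]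
    [Fintype H] [DecidableEq H] [FunLike F G H] [AddMonoidHomClass F G H] (f : F)
    (hf : Function.Surjective f) (b : H) :
    #{g | f g = b} * Fintype.card H = Fintype.card G := by
  calc #{g | f g = b} * Fintype.card H = ∑ b' : H, #{g | f g = b'} := by
        rw [Finset.sum_congr rfl fun b' _ =>
            AddMonoidHom.card_fiber_eq_of_mem_range f (hf b') (hf b), sum_const,
          card_univ, smul_eq_mul, mul_comm]
    _ = Fintype.card G := (card_eq_sum_card_fiberwise fun g _ => mem_univ (f g)).symm

namespace ZMod

variable {ι : Type*} {n : ℕ} {B : ι → ℕ}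

def piCastHom (hB : ∀ q, B q ∣ n) : (ι → ZMod n) →+* ∀ q, ZMod (B q) :=
  RingHom.pi fun q => (castHom (hB q) (ZMod (B q))).comp (Pi.evalRingHom _ q)

theorem piCastHom_surjective (hB : ∀ q, B q ∣ n) : Function.Surjective (piCastHom hB) :=
  Function.Surjective.piMap fun q => castHom_surjective (hB q)

theorem card_fiber_piCastHom_mul [Fintype ι] [DecidableEq ι] [NeZero n] [∀ q, NeZero (B q)]
    (hB : ∀ q, B q ∣ n) (b : ∀ q, ZMod (B q)) :
    #{g | piCastHom hB g = b} * ∏ q, B q = n ^ Fintype.card ι := by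
  simpa only [Fintype.card_pi, card, prod_const, card_univ] using
    AddMonoidHom.card_fiber_mul_card_eq _ (piCastHom_surjective hB) b

theorem ncard_setOf_and_forall_castHom_eq [Fintype ι] [DecidableEq ι] [NeZero n]
    (hB : ∀ q, B q ∣ n)
    (P : (ι → ZMod n) → Prop) [DecidablePred P] (b : ∀ q, ZMod (B q)) :
    {g | P g ∧ ∀ q, castHom (hB q) (ZMod (B q)) (g q) = b q}.ncard =
      #{g | P g ∧ piCastHom hB g = b} := by
  rw [← Set.ncard_coe_finset]
  congr
  ext g
  simp [funext_iff, piCastHom]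

end ZMod

theorem MeasureTheory.isProbabilityMeasure_one_sub_smul_dirac_add_smul_dirac {α : Type*}
    [MeasurableSpace α] {p : ℝ≥0∞} (hp : p ≤ 1) (a b : α) :
    IsProbabilityMeasure ((1 - p) • Measure.dirac a + p • Measure.dirac b) :=
  ⟨by simp [tsub_add_cancel_of_le hp]⟩

namespace MeasureTheory.Measure

variable {ι α : Type*} [Fintype ι] [MeasurableSpace α]
  (ν : Measure α) [IsProbabilityMeasure ν] (s : Set α) [DecidablePred (· ∈ s)]

theorem pi_lt_card_filter_mem_le (F : Finset ι) (t : ℕ) :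
    Measure.pi (fun _ : ι => ν) {ω | t < #{g ∈ F | ω g ∈ s}} ≤ (#F * ν s) ^ (t + 1) := by
  calc Measure.pi (fun _ : ι => ν) {ω | t < #{g ∈ F | ω g ∈ s}}
      ≤ Measure.pi (fun _ => ν)
          (⋃ T ∈ F.powersetCard (t + 1), (T : Set ι).pi fun _ => s) := by
        refine measure_mono fun ω hω => ?_
        obtain ⟨T, hTF, hT⟩ := exists_subset_card_eq (Nat.succ_le_of_lt hω)
        exact Set.mem_biUnion (mem_powersetCard.2 ⟨hTF.trans (filter_subset _ _), hT⟩)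
          fun g hg => (mem_filter.1 (hTF hg)).2
    _ ≤ ∑ T ∈ F.powersetCard (t + 1), Measure.pi (fun _ => ν) ((T : Set ι).pi fun _ => s) :=
        measure_biUnion_finset_le _ _
    _ = (#F).choose (t + 1) * ν s ^ (t + 1) := by
        rw [Finset.sum_congr rfl fun T hT => by
          rw [pi_pi_finset, prod_const, (mem_powersetCard.1 hT).2], sum_const,
          card_powersetCard, nsmul_eq_mul]
    _ ≤ (#F * ν s) ^ (t + 1) := by
        rw [mul_pow]
        gcongr
        exact_mod_cast Nat.choose_le_pow _ _

theorem pi_exists_lt_card_fiber_le {H : Type*} [Fintype H] [DecidableEq H] (f : ι → H) (t : ℕ)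
    {c : ℝ≥0∞} (hc : ∀ b, #{g | f g = b} * ν s ≤ c) :
    Measure.pi (fun _ : ι => ν) {ω | ∃ b, t < #{g | ω g ∈ s ∧ f g = b}} ≤
      Fintype.card H * c ^ (t + 1) := by
  calc Measure.pi (fun _ : ι => ν) {ω | ∃ b, t < #{g | ω g ∈ s ∧ f g = b}}
      = Measure.pi (fun _ : ι => ν) (⋃ b, {ω | t < #{g ∈ {g | f g = b} | ω g ∈ s}}) := by
        simp only [filter_filter, and_comm, Set.ofPred_exists]
    _ ≤ ∑ b, Measure.pi (fun _ : ι => ν) {ω | t < #{g ∈ {g | f g = b} | ω g ∈ s}} :=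
        measure_iUnion_fintype_le _ _
    _ ≤ ∑ _b : H, c ^ (t + 1) :=
        sum_le_sum fun b _ => (pi_lt_card_filter_mem_le ν s _ t).trans (by gcongr; exact hc b)
    _ = Fintype.card H * c ^ (t + 1) := by rw [sum_const, card_univ, nsmul_eq_mul]

end MeasureTheory.Measure

theorem ENNReal.natCast_mul_div_le_inv_four {M P N k : ℕ} (h : M * P = N) (hk : 4 * k ≤ P) :
    (M : ℝ≥0∞) * (k / N) ≤ 4⁻¹ := by
  rw [← mul_div_assoc]
  apply ENNReal.div_le_of_le_mul
  push_cast [← h]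
  calc (M : ℝ≥0∞) * k = 4⁻¹ * (M * (4 * k)) := by
        rw [mul_left_comm (M : ℝ≥0∞), ← mul_assoc,
          ENNReal.inv_mul_cancel (by norm_num) (by norm_num), one_mul]
    _ ≤ 4⁻¹ * (M * P) := by gcongr; exact_mod_cast hk

theorem ENNReal.two_pow_mul_inv_four_pow_le (j : ℕ) :
    (2 : ℝ≥0∞) ^ j * 4⁻¹ ^ (2 * j + 1) ≤ 1 / ((2 : ℝ≥0∞) ^ j) ^ 3 := by
  have h4 : (4⁻¹ : ℝ≥0∞) = 2⁻¹ ^ 2 := by rw [← ENNReal.inv_pow]; norm_num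
  calc (2 : ℝ≥0∞) ^ j * 4⁻¹ ^ (2 * j + 1) = 2⁻¹ ^ (3 * j + 2) := by
        rw [h4, ← pow_mul, show 2 * (2 * j + 1) = j + (3 * j + 2) by ring, pow_add, ← mul_assoc,
          ← mul_pow, ENNReal.mul_inv_cancel two_ne_zero ENNReal.ofNat_ne_top, one_pow, one_mul]
    _ ≤ 2⁻¹ ^ (3 * j) :=
        pow_le_pow_of_le_one zero_le (ENNReal.inv_le_one.2 one_le_two) (by omega)
    _ = 1 / ((2 : ℝ≥0∞) ^ j) ^ 3 := by rw [one_div, ← pow_mul, ENNReal.inv_pow, mul_comm]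

theorem stmt14 : ∃ C : ℝ, 0 < C ∧
    ∀ (m : ℕ), 1 ≤ m → ∀ (n : ℕ), n = 2 ^ m → ∀ [NeZero n],
    ∀ (d : ℕ), 1 ≤ d → ∀ (k : ℕ), 1 ≤ k → k ≤ n ^ d →
    ∀ (B : Fin d → ℕ), (∀ q, ∃ e : ℕ, B q = 2 ^ e) →
      ∀ (hB : ∀ q, B q ∣ n), 4 * k ≤ ∏ q, B q →
    ∀ (μ : Measure ((Fin d → ZMod n) → Bool)),
      μ = (Measure.pi fun _ : Fin d → ZMod n =>
        (1 - (k : ℝ≥0∞) / ((n : ℝ≥0∞) ^ d)) • Measure.dirac false +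
          ((k : ℝ≥0∞) / ((n : ℝ≥0∞) ^ d)) • Measure.dirac true) →
    1 - 1 / ((n : ℝ≥0∞) ^ d) ^ 3 ≤
      μ {ω | ∀ b : ∀ q, ZMod (B q),
        (({g : Fin d → ZMod n | ω g = true ∧
            ∀ q, ZMod.castHom (hB q) (ZMod (B q)) (g q) = b q}.ncard : ℝ))
          ≤ C * Real.logb 2 ((n : ℝ) ^ d)} := by
  classical
  refine ⟨2, two_pos, ?_⟩
  intro m _ n hn _ d _ k _ hkN B _ hB hBk μ rfl
  have : ∀ q, NeZero (B q) := fun q => ⟨ne_zero_of_dvd_ne_zero (NeZero.ne n) (hB q)⟩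
  set p : ℝ≥0∞ := (k : ℝ≥0∞) / (n : ℝ≥0∞) ^ d
  have := isProbabilityMeasure_one_sub_smul_dirac_add_smul_dirac
    (p := p) (ENNReal.div_le_of_le_mul (by rw [one_mul]; exact_mod_cast hkN)) false true
  have hN : (n : ℝ≥0∞) ^ d = 2 ^ (m * d) := by rw [hn]; push_cast; rw [← pow_mul]
  have hlog : 2 * Real.logb 2 ((n : ℝ) ^ d) = (2 * (m * d) : ℕ) := by
    rw [hn]; push_cast; rw [← pow_mul, Real.logb_pow, Real.logb_self_eq_one one_lt_two]
    push_cast; ring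
  have hcard : Fintype.card (∀ q, ZMod (B q)) ≤ n ^ d := by
    simpa [ZMod.card] using Fintype.card_le_of_surjective _ (ZMod.piCastHom_surjective hB)
  have hbad := Measure.pi_exists_lt_card_fiber_le
    ((1 - p) • Measure.dirac false + p • Measure.dirac true) {true} (ZMod.piCastHom hB)
    (2 * (m * d)) (c := 4⁻¹) fun b => by
      simpa using ENNReal.natCast_mul_div_le_inv_four (ZMod.card_fiber_piCastHom_mul hB b) hBk
  calc 1 - 1 / ((n : ℝ≥0∞) ^ d) ^ 3
      ≤ 1 - (n : ℝ≥0∞) ^ d * 4⁻¹ ^ (2 * (m * d) + 1) := by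
        rw [hN]
        gcongr
        exact ENNReal.two_pow_mul_inv_four_pow_le _
    _ ≤ 1 - Fintype.card (∀ q, ZMod (B q)) * 4⁻¹ ^ (2 * (m * d) + 1) := by
        gcongr
        exact_mod_cast hcard
    _ ≤ 1 - _ := tsub_le_tsub_left hbad 1
    _ = _ := (prob_compl_eq_one_sub (Set.to_countable _).measurableSet).symm
    _ ≤ _ := measure_mono ?_
  intro ω hω b
  simp only [Set.mem_compl_iff, Set.mem_ofPred_eq, not_exists, not_lt] at hω
  rw [hlog, ZMod.ncard_setOf_and_forall_castHom_eq]
  exact_mod_cast hω b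
end
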